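/- Effect-preserving cases: for all words u, v, z over the alphabet {⟨, ⟩}: (i) if r(uv) > ℓ(z), then: if ℓ(u⟩v) = ℓ(uv) + 1 and r(u⟩v) = r(uv) then ℓ((u⟩v)·z) = ℓ((uv)·z) + 1 and r((u⟩v)·z) = r((uv)·z), and if ℓ(u⟩v) = ℓ(uv) and r(u⟩v) = r(uv) − 1 then ℓ((u⟩v)·z) = ℓ((uv)·z) and r((u⟩v)·z) = r((uv)·z) − 1; (ii) symmetrically, if r(z) ≤ ℓ(uv) then the effect of the insertion on z·(u⟩v) relative to z·(uv) equals its effect on u⟩v relative to uv. -/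

import Mathlib

/-- The alphabet `Σ_k` of `k` types of opening (`op`) and closing (`cl`) parentheses. -/
inductive Par (k : ℕ) where
  | op : Fin k → Par k
  | cl : Fin k → Par k
deriving DecidableEq

namespace Par

/-- One step of the type-unaware reduction: `μ_u(zσ)` computed from `μ_u(z)`. -/
def muUStep {k : ℕ} (z : List (Par k)) (σ : Par k) : List (Par k) :=
  match z.getLast?, σ with
  | some (op _), cl _ => z.dropLast
  | _, _ => z ++ [σ]

/-- The type-unaware reduction `μ_u`. -/
def muU {k : ℕ} (w : List (Par k)) : List (Par k) := w.foldl muUStep []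

/-- One step of the type-aware reduction: cancellation requires matching types. -/
def muAStep {k : ℕ} (z : List (Par k)) (σ : Par k) : List (Par k) :=
  match z.getLast?, σ with
  | some (op i), cl j => if i = j then z.dropLast else z ++ [σ]
  | _, _ => z ++ [σ]

/-- The type-aware reduction `μ_a`. -/
def muA {k : ℕ} (w : List (Par k)) : List (Par k) := w.foldl muAStep []

/-- Is the symbol a closing parenthesis? -/
def isCl {k : ℕ} : Par k → Bool
  | cl _ => true
  | _ => false

/-- Is the symbol an opening parenthesis? -/
def isOp {k : ℕ} : Par k → Bool
  | op _ => true
  | _ => false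

/-- `ℓ(w)`: the number of unmatched closing parentheses of `w`. -/
def ell {k : ℕ} (w : List (Par k)) : ℕ := (muU w).countP isCl

/-- `r(w)`: the number of unmatched opening parentheses of `w`. -/
def rr {k : ℕ} (w : List (Par k)) : ℕ := (muU w).countP isOp

/-- The Dyck language `D_k`: smallest set containing `ε`, closed under
concatenation, and containing `⟨_i w ⟩_i` whenever it contains `w`. -/
inductive Dyck {k : ℕ} : List (Par k) → Prop where
  | nil : Dyck []
  | append {u v : List (Par k)} : Dyck u → Dyck v → Dyck (u ++ v)
  | wrap {w : List (Par k)} (i : Fin k) : Dyck w → Dyck (op i :: w ++ [cl i])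

end Par

/-! The reduced word `μ_u(w)` has the shape `⟩^ℓ(w) ⟨^r(w)` (types aside), so reducing `wz`
cancels exactly `min(r(w), ℓ(z))` opening parentheses of `w` against closing ones of `z`:
`ℓ(wz) = ℓ(w) + (ℓ(z) ∸ r(w))` and `r(wz) = r(z) + (r(w) ∸ ℓ(z))`.
Inserting `⟩` into a word therefore either raises `ℓ` by one or lowers `r` by one, and under
the hypotheses of either case these formulas carry that effect over to the concatenation. -/

namespace Par

variable {k : ℕ}

@[simp] lemma isCl_cl (i : Fin k) : isCl (cl i) = true := rfl
@[simp] lemma isCl_op (i : Fin k) : isCl (op i) = false := rfl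
@[simp] lemma isOp_op (i : Fin k) : isOp (op i) = true := rfl
@[simp] lemma isOp_cl (i : Fin k) : isOp (cl i) = false := rfl

lemma eq_op_of_isOp {x : Par k} (hx : isOp x) : ∃ i, x = op i := by
  cases x with
  | op i => exact ⟨i, rfl⟩
  | cl i => simp at hx

lemma muU_concat (w : List (Par k)) (σ : Par k) : muU (w ++ [σ]) = muUStep (muU w) σ := by
  simp [muU]

lemma muUStep_op (z : List (Par k)) (i : Fin k) : muUStep z (op i) = z ++ [op i] := by
  unfold muUStep
  split <;> simp_all

lemma muUStep_concat_op_cl (z : List (Par k)) (i j : Fin k) :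
    muUStep (z ++ [op i]) (cl j) = z := by
  simp [muUStep]

lemma muUStep_cl_of_forall_isCl {c : List (Par k)} (hc : ∀ x ∈ c, isCl x) (j : Fin k) :
    muUStep c (cl j) = c ++ [cl j] := by
  rcases c.eq_nil_or_concat' with rfl | ⟨c', x, rfl⟩
  · rfl
  · cases x with
    | op i => simpa using hc (op i)
    | cl i => simp [muUStep]

lemma muUStep_append_cl {c o : List (Par k)} (hc : ∀ x ∈ c, isCl x) (ho : ∀ x ∈ o, isOp x)
    (j : Fin k) :
    (o = [] ∧ muUStep c (cl j) = c ++ [cl j]) ∨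
      ∃ o' i, o = o' ++ [op i] ∧ muUStep (c ++ o) (cl j) = c ++ o' := by
  rcases o.eq_nil_or_concat' with rfl | ⟨o', x, rfl⟩
  · exact .inl ⟨rfl, muUStep_cl_of_forall_isCl hc j⟩
  · obtain ⟨i, rfl⟩ := eq_op_of_isOp (ho x (by simp))
    exact .inr ⟨o', i, rfl, by rw [← List.append_assoc, muUStep_concat_op_cl]⟩

theorem exists_muU_eq_append (w : List (Par k)) :
    ∃ c o, muU w = c ++ o ∧ (∀ x ∈ c, isCl x) ∧ ∀ x ∈ o, isOp x := by
  induction w using List.reverseRecOn with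
  | nil => exact ⟨[], [], rfl, by simp, by simp⟩
  | append_singleton w σ ih =>
    obtain ⟨c, o, hw, hc, ho⟩ := ih
    rw [muU_concat, hw]
    cases σ with
    | op i =>
      refine ⟨c, o ++ [op i], by rw [muUStep_op, List.append_assoc], hc, ?_⟩
      simpa [or_imp, forall_and] using ho
    | cl j =>
      rcases muUStep_append_cl hc ho j with ⟨rfl, h⟩ | ⟨o', i, rfl, h⟩
      · refine ⟨c ++ [cl j], [], by rw [List.append_nil, h, List.append_nil], ?_, by simp⟩
        simpa [or_imp, forall_and] using hc
      · exact ⟨c, o', h, hc, fun x hx => ho x (by simp [hx])⟩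

lemma ell_concat_op (w : List (Par k)) (i : Fin k) : ell (w ++ [op i]) = ell w := by
  simp [ell, muU_concat, muUStep_op]

lemma rr_concat_op (w : List (Par k)) (i : Fin k) : rr (w ++ [op i]) = rr w + 1 := by
  simp [rr, muU_concat, muUStep_op]

lemma ell_rr_concat_cl (w : List (Par k)) (j : Fin k) :
    ell (w ++ [cl j]) = ell w + (1 - rr w) ∧ rr (w ++ [cl j]) = rr w - 1 := by
  obtain ⟨c, o, hw, hc, ho⟩ := exists_muU_eq_append w
  have hcOp : c.countP isOp = 0 := List.countP_eq_zero.2 fun x hx => by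
    cases x with
    | op i => simpa using hc _ hx
    | cl i => simp
  simp only [ell, rr, muU_concat, hw]
  rcases muUStep_append_cl hc ho j with ⟨rfl, h⟩ | ⟨o', i, rfl, h⟩ <;>
    simp [h, List.countP_append, hcOp]

theorem rr_append (w z : List (Par k)) : rr (w ++ z) = rr z + (rr w - ell z) := by
  induction z using List.reverseRecOn with
  | nil => simp [ell, rr, muU]
  | append_singleton z σ ih =>
    rw [← List.append_assoc]
    cases σ with
    | op i => simp only [rr_concat_op, ell_concat_op, ih]; omega
    | cl j =>
      simp only [(ell_rr_concat_cl _ j).1, (ell_rr_concat_cl _ j).2, ih]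
      omega

theorem ell_append (w z : List (Par k)) : ell (w ++ z) = ell w + (ell z - rr w) := by
  induction z using List.reverseRecOn with
  | nil => simp [ell, rr, muU]
  | append_singleton z σ ih =>
    rw [← List.append_assoc]
    cases σ with
    | op i => simp only [ell_concat_op, ih]
    | cl j =>
      simp only [(ell_rr_concat_cl _ j).1, rr_append, ih]
      omega

theorem ell_rr_insert_cl (u v : List (Par k)) (j : Fin k) :
    (ell (u ++ cl j :: v) = ell (u ++ v) + 1 ∧ rr (u ++ cl j :: v) = rr (u ++ v)) ∨
      (ell (u ++ cl j :: v) = ell (u ++ v) ∧ rr (u ++ cl j :: v) + 1 = rr (u ++ v)) := by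
  rw [show u ++ cl j :: v = u ++ [cl j] ++ v by simp]
  simp only [ell_append, rr_append, (ell_rr_concat_cl u j).1,
    (ell_rr_concat_cl u j).2]
  omega

end Par

/-- effect-preserving cases. (i) if `r(uv) > ℓ(z)` then the effect of
inserting a closing parenthesis into the left part carries over unchanged to the
concatenation; (ii) if `r(z) ≤ ℓ(uv)` then the effect of the insertion on
`z·(u⟩v)` relative to `z·(uv)` equals its effect on `u⟩v` relative to `uv`. -/
theorem effect_preserving (u v z : List (Par 1)) :
    (Par.ell z < Par.rr (u ++ v) →
      ((Par.ell (u ++ Par.cl 0 :: v) = Par.ell (u ++ v) + 1 ∧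
        Par.rr (u ++ Par.cl 0 :: v) = Par.rr (u ++ v)) →
        Par.ell ((u ++ Par.cl 0 :: v) ++ z) = Par.ell ((u ++ v) ++ z) + 1 ∧
        Par.rr ((u ++ Par.cl 0 :: v) ++ z) = Par.rr ((u ++ v) ++ z)) ∧
      ((Par.ell (u ++ Par.cl 0 :: v) = Par.ell (u ++ v) ∧
        Par.rr (u ++ Par.cl 0 :: v) + 1 = Par.rr (u ++ v)) →
        Par.ell ((u ++ Par.cl 0 :: v) ++ z) = Par.ell ((u ++ v) ++ z) ∧
        Par.rr ((u ++ Par.cl 0 :: v) ++ z) + 1 = Par.rr ((u ++ v) ++ z))) ∧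
    (Par.rr z ≤ Par.ell (u ++ v) →
      (Par.ell (z ++ (u ++ Par.cl 0 :: v)) : ℤ) - (Par.ell (z ++ (u ++ v)) : ℤ) =
        (Par.ell (u ++ Par.cl 0 :: v) : ℤ) - (Par.ell (u ++ v) : ℤ) ∧
      (Par.rr (z ++ (u ++ Par.cl 0 :: v)) : ℤ) - (Par.rr (z ++ (u ++ v)) : ℤ) =
        (Par.rr (u ++ Par.cl 0 :: v) : ℤ) - (Par.rr (u ++ v) : ℤ)) := by
  rcases Par.ell_rr_insert_cl u v 0 with h | h <;>
    simp only [Par.ell_append _ z, Par.rr_append _ z, Par.ell_append z, Par.rr_append z] <;>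
    omega
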